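/- For M > 0 and v ∈ ℝ², the function H(x,t) = t^{-1/2}(M - ‖x + 2vt‖²/(16 t^{1/2})) satisfies ∂ₜH - 2∇·(H∇H) - 2v·∇H = 0 at every point (x,t) with t > 0 where H(x,t) > 0. -/

import Mathlib

/-!
Writing `X = x + 2 v₁ t`, `Y = y + 2 v₂ t` and `R = X² + Y²`, the profile is
`H = M t^{-1/2} - R / (16 t)`. Its spatial derivatives are `∂ₓH = -X / (8t)`, `∂ᵧH = -Y / (8t)`,
so `ΔH = -1 / (4t)`, and `∂ₜH = -M t^{-3/2} / 2 - (v₁X + v₂Y) / (4t) + R / (16t²)`.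
The drift terms `v · ∇H` cancel against the `t`-dependence of `X, Y`, and what remains is an
algebraic identity in `√t`, checked after substituting `t = r²`.
-/

noncomputable section

def pd1 (f : ℝ → ℝ → ℝ → ℝ) (x y t : ℝ) : ℝ := deriv (fun s => f s y t) x
def pd2 (f : ℝ → ℝ → ℝ → ℝ) (x y t : ℝ) : ℝ := deriv (fun s => f x s t) y
def pdt (f : ℝ → ℝ → ℝ → ℝ) (x y t : ℝ) : ℝ := deriv (fun s => f x y s) t

open Real

def barenblatt (M v₁ v₂ x y t : ℝ) : ℝ :=
  (M - ((x + 2 * v₁ * t) ^ 2 + (y + 2 * v₂ * t) ^ 2) / (16 * √t)) / √t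

section
variable (M v₁ v₂ : ℝ) {x y t : ℝ}

lemma barenblatt_comm (x y t : ℝ) : barenblatt M v₁ v₂ x y t = barenblatt M v₂ v₁ y x t := by
  rw [barenblatt, barenblatt, add_comm]

lemma hasDerivAt_barenblatt_fst (ht : 0 ≤ t) :
    HasDerivAt (fun s => barenblatt M v₁ v₂ s y t) (-(x + 2 * v₁ * t) / (8 * t)) x := by
  have h := (((((hasDerivAt_id x).add_const (2 * v₁ * t)).pow 2).add_const
    ((y + 2 * v₂ * t) ^ 2)).div_const (16 * √t)).const_sub M |>.div_const √t
  refine h.congr_deriv ?_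
  obtain ⟨r, hr, rfl⟩ : ∃ r, 0 ≤ r ∧ t = r ^ 2 := ⟨√t, sqrt_nonneg t, (sq_sqrt ht).symm⟩
  rw [sqrt_sq hr, id]
  field_simp
  ring

lemma pd1_barenblatt (ht : 0 ≤ t) :
    pd1 (barenblatt M v₁ v₂) x y t = -(x + 2 * v₁ * t) / (8 * t) :=
  (hasDerivAt_barenblatt_fst M v₁ v₂ ht).deriv

lemma pd2_barenblatt (ht : 0 ≤ t) :
    pd2 (barenblatt M v₁ v₂) x y t = -(y + 2 * v₂ * t) / (8 * t) := by
  simp only [pd2, barenblatt_comm M v₁ v₂ x]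
  exact pd1_barenblatt M v₂ v₁ ht

lemma pd1_pd1_barenblatt (ht : 0 ≤ t) : pd1 (pd1 (barenblatt M v₁ v₂)) x y t = -1 / (8 * t) := by
  rw [pd1]
  simp [pd1_barenblatt M v₁ v₂ ht]

lemma pd2_pd2_barenblatt (ht : 0 ≤ t) : pd2 (pd2 (barenblatt M v₁ v₂)) x y t = -1 / (8 * t) := by
  rw [pd2]
  simp [pd2_barenblatt M v₁ v₂ ht]

lemma hasDerivAt_barenblatt_time (ht : 0 < t) :
    HasDerivAt (fun s => barenblatt M v₁ v₂ x y s)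
      (-M / (2 * t * √t) - (v₁ * (x + 2 * v₁ * t) + v₂ * (y + 2 * v₂ * t)) / (4 * t)
        + ((x + 2 * v₁ * t) ^ 2 + (y + 2 * v₂ * t) ^ 2) / (16 * t ^ 2)) t := by
  have hsqrt := hasDerivAt_sqrt ht.ne'
  have hX := (((hasDerivAt_id t).const_mul (2 * v₁)).const_add x).pow 2
  have hY := (((hasDerivAt_id t).const_mul (2 * v₂)).const_add y).pow 2
  have h := (((hX.add hY).div (hsqrt.const_mul 16) (by positivity)).const_sub M).div hsqrt
    (sqrt_pos.2 ht).ne'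
  refine h.congr_deriv ?_
  simp only [id, Pi.add_apply, Pi.pow_apply, Pi.div_apply]
  obtain ⟨r, hr, rfl⟩ : ∃ r, 0 < r ∧ t = r ^ 2 := ⟨√t, sqrt_pos.2 ht, (sq_sqrt ht.le).symm⟩
  rw [sqrt_sq hr.le]
  field_simp
  ring

lemma pdt_barenblatt (ht : 0 < t) :
    pdt (barenblatt M v₁ v₂) x y t =
      -M / (2 * t * √t) - (v₁ * (x + 2 * v₁ * t) + v₂ * (y + 2 * v₂ * t)) / (4 * t)
        + ((x + 2 * v₁ * t) ^ 2 + (y + 2 * v₂ * t) ^ 2) / (16 * t ^ 2) :=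
  (hasDerivAt_barenblatt_time M v₁ v₂ ht).deriv

end

theorem barenblatt_inclined_plane_general (M : ℝ) (v1 v2 : ℝ)
    (H : ℝ → ℝ → ℝ → ℝ)
    (hH : ∀ x y t, H x y t =
      (M - ((x + 2 * v1 * t) ^ 2 + (y + 2 * v2 * t) ^ 2) / (16 * Real.sqrt t)) / Real.sqrt t) :
    ∀ x y t, 0 < t → 0 < H x y t →
      pdt H x y t
        - 2 * ((pd1 H x y t) ^ 2 + (pd2 H x y t) ^ 2
            + H x y t * (pd1 (pd1 H) x y t + pd2 (pd2 H) x y t))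
        - 2 * (v1 * pd1 H x y t + v2 * pd2 H x y t) = 0 := by
  obtain rfl : H = barenblatt M v1 v2 := funext fun x => funext fun y => funext (hH x y)
  intro x y t ht _
  rw [pdt_barenblatt M v1 v2 ht, pd1_barenblatt M v1 v2 ht.le, pd2_barenblatt M v1 v2 ht.le,
    pd1_pd1_barenblatt M v1 v2 ht.le, pd2_pd2_barenblatt M v1 v2 ht.le, barenblatt]
  obtain ⟨r, hr, rfl⟩ : ∃ r, 0 < r ∧ t = r ^ 2 := ⟨√t, sqrt_pos.2 ht, (sq_sqrt ht.le).symm⟩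
  rw [sqrt_sq hr.le]
  field_simp
  ring

/-- The shifted Barenblatt profile
`H(x,t) = t^{-1/2} (M - ‖x + 2vt‖²/(16 t^{1/2}))` satisfies
`∂ₜH - 2∇·(H∇H) - 2v·∇H = 0` wherever `t > 0` and `H > 0`. -/
theorem barenblatt_inclined_plane (M : ℝ) (hM : 0 < M) (v1 v2 : ℝ)
    (H : ℝ → ℝ → ℝ → ℝ)
    (hH : ∀ x y t, H x y t =
      (M - ((x + 2 * v1 * t) ^ 2 + (y + 2 * v2 * t) ^ 2) / (16 * Real.sqrt t)) / Real.sqrt t) :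
    ∀ x y t, 0 < t → 0 < H x y t →
      pdt H x y t
        - 2 * ((pd1 H x y t) ^ 2 + (pd2 H x y t) ^ 2
            + H x y t * (pd1 (pd1 H) x y t + pd2 (pd2 H) x y t))
        - 2 * (v1 * pd1 H x y t + v2 * pd2 H x y t) = 0 :=
  barenblatt_inclined_plane_general M v1 v2 H hH
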